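/- arXiv:0905.3018 — 2 statements merged into one kernel-verified Lean document; each statement's English description precedes it below -/
import Mathlib

section
/- Let R > 0, l ≥ 1, and let f be a holomorphic function on the tube F_R = {λ ∈ ℂ^l : ‖Im λ‖ < R} such that f(λ) = f(μ) whenever λ, μ ∈ F_R satisfy λ₁² + ⋯ + λ_l² = μ₁² + ⋯ + μ_l². Define g on the strip I_R = {z ∈ ℂ : |Im z| < R} by g(s) = f(s, 0, …, 0). Then g is an even holomorphic function on I_R, and f(λ) = g(s) for every λ ∈ F_R and every s ∈ I_R with s² = λ₁² + ⋯ + λ_l². -/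
/-!
STATEMENT 3: a holomorphic function on the tube `F_R ⊆ ℂ^l` depending only on the
complex square sum `λ₁² + ⋯ + λ_l²` restricts, along `(s, 0, …, 0)`, to an even
holomorphic function `g` on the strip `I_R` with `f(λ) = g(s)` whenever
`s² = λ₁² + ⋯ + λ_l²`.
-/

/-- The open horizontal strip `I_R = {z ∈ ℂ : |Im z| < R}`. -/
def openStrip (R : ℝ) : Set ℂ := {z : ℂ | |z.im| < R}

/-- The tube domain `F_R = {λ ∈ ℂ^l : ‖Im λ‖ < R}` (Euclidean norm of the imaginary
part). -/
def tube (l : ℕ) (R : ℝ) : Set (Fin l → ℂ) :=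
  {lam | Real.sqrt (∑ i, (lam i).im ^ 2) < R}

/-- If `f` is holomorphic on `F_R` and `f(λ) = f(μ)` whenever the complex square sums
of `λ` and `μ` agree, then `g(s) := f(s, 0, …, 0)` is an even holomorphic function on
`I_R`, and `f(λ) = g(s)` for all `λ ∈ F_R`, `s ∈ I_R` with `s² = λ₁² + ⋯ + λ_l²`. -/
theorem radial_holomorphic_gives_even_on_strip {R : ℝ} (hR : 0 < R)
    {l : ℕ} (hl : 1 ≤ l) (f : (Fin l → ℂ) → ℂ)
    (hf : DifferentiableOn ℂ f (tube l R))
    (hrad : ∀ lam mu, lam ∈ tube l R → mu ∈ tube l R →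
      (∑ i, lam i ^ 2) = (∑ i, mu i ^ 2) → f lam = f mu) :
    (∀ s ∈ openStrip R,
      f (fun i : Fin l => if i.val = 0 then -s else 0)
        = f (fun i : Fin l => if i.val = 0 then s else 0)) ∧
    DifferentiableOn ℂ
      (fun s : ℂ => f (fun i : Fin l => if i.val = 0 then s else 0)) (openStrip R) ∧
    (∀ lam ∈ tube l R, ∀ s ∈ openStrip R, s ^ 2 = ∑ i, lam i ^ 2 →
      f lam = f (fun i : Fin l => if i.val = 0 then s else 0)) := by
  set e : ℂ → (Fin l → ℂ) := fun s i => if i.val = 0 then s else 0 with he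
  have i0 : Fin l := ⟨0, hl⟩
  have hsum : ∀ {M : Type} [AddCommMonoid M] (s : ℂ) (g : ℂ → M), g 0 = 0 → (∑ i, g (e s i)) = g s := by
    intro M _ s g hg0
    rw [Finset.sum_eq_single (⟨0, hl⟩ : Fin l)]
    · simp [e]
    · intro i _ hi
      have : i.val ≠ 0 := by
        intro h; exact hi (Fin.ext h)
      simp [e, this, hg0]
    · intro h; exact absurd (Finset.mem_univ _) h
  have hmem : ∀ s ∈ openStrip R, e s ∈ tube l R := by
    intro s hs
    simp only [tube, Set.mem_setOf_eq]
    have : (∑ i, (e s i).im ^ 2) = s.im ^ 2 :=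
      hsum s (fun z => z.im ^ 2) (by simp)
    rw [this, Real.sqrt_sq_eq_abs]
    exact hs
  have hsq : ∀ s : ℂ, (∑ i, e s i ^ 2) = s ^ 2 := fun s =>
    hsum s (fun z => z ^ 2) (by simp)
  have hneg : ∀ s ∈ openStrip R, -s ∈ openStrip R := by
    intro s hs
    simpa [openStrip, abs_neg] using hs
  refine ⟨?_, ?_, ?_⟩
  · intro s hs
    exact hrad _ _ (hmem _ (hneg s hs)) (hmem s hs) (by rw [hsq, hsq, neg_pow]; ring)
  · have hde : Differentiable ℂ e := by
      rw [differentiable_pi]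
      intro i
      by_cases h : i.val = 0
      · simp only [e, h, if_true]; exact differentiable_id
      · simp only [e, h, if_false]; exact differentiable_const (0 : ℂ)
    exact hf.comp hde.differentiableOn hmem
  · intro lam hlam s hs hseq
    exact hrad _ _ hlam (hmem s hs) (by rw [hsq, hseq])
end

section
/- Let R > 0, l ≥ 1, and let g be an even, bounded, holomorphic function on the strip I_R = {z ∈ ℂ : |Im z| < R}. Then there exists a bounded holomorphic function f on the tube F_R = {λ ∈ ℂ^l : ‖Im λ‖ < R} such that f(λ) = g(s) for every λ ∈ F_R and every s ∈ I_R with s² = λ₁² + ⋯ + λ_l², and moreover sup_{λ ∈ F_R} |f(λ)| ≤ sup_{s ∈ I_R} |g(s)|. -/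
open Complex Filter Topology

theorem Complex.sq_sqrt (z : ℂ) : z.sqrt ^ 2 = z :=
  cpow_nat_inv_pow z two_ne_zero

lemma apply_eq_apply_of_sq_eq {g : ℂ → ℂ} {U : Set ℂ} (heven : ∀ s ∈ U, g (-s) = g s)
    {s t : ℂ} (ht : t ∈ U) (h : s ^ 2 = t ^ 2) : g s = g t := by
  rcases sq_eq_sq_iff_eq_or_eq_neg.mp h with rfl | rfl
  · rfl
  · exact heven t ht

section EvenCompSqrt

variable {g : ℂ → ℂ} {U Ω : Set ℂ}

lemma differentiableAt_comp_sqrt_of_ne_zero (hU : IsOpen U) (hΩ : IsOpen Ω)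
    (hg : DifferentiableOn ℂ g U) (heven : ∀ s ∈ U, g (-s) = g s)
    (hroots : ∀ s, s ^ 2 ∈ Ω → s ∈ U) {w : ℂ} (hw : w ∈ Ω) (hw0 : w ≠ 0) :
    DifferentiableAt ℂ (g ∘ sqrt) w := by
  have hgU : ∀ {z}, z ^ 2 ∈ Ω → DifferentiableAt ℂ g z :=
    fun hz => hg.differentiableAt (hU.mem_nhds (hroots _ hz))
  by_cases hslit : w ∈ slitPlane
  · exact (hgU (by rwa [sq_sqrt])).comp w (differentiableAt_sqrt hslit)
  -- On the negative real axis the principal root jumps; `I * √(-z)` is another root, smooth there.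
  have hneg : -w ∈ slitPlane := by
    rw [mem_slitPlane_iff, not_or, not_lt, not_not] at hslit
    exact Or.inl (by simpa using hslit.1.lt_of_ne fun h => hw0 (ext h hslit.2))
  have hsq : ∀ z : ℂ, (I * (-z).sqrt) ^ 2 = z := fun z => by
    rw [mul_pow, I_sq, sq_sqrt]; ring
  have heq : (fun z => g (I * (-z).sqrt)) =ᶠ[𝓝 w] g ∘ sqrt := by
    filter_upwards [hΩ.mem_nhds hw] with z hz
    refine apply_eq_apply_of_sq_eq heven (hroots _ ?_) (by rw [hsq, sq_sqrt])
    rwa [sq_sqrt]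
  refine heq.differentiableAt_iff.mp ((hgU (by rwa [hsq])).comp w ?_)
  exact (differentiableAt_sqrt hneg).comp w differentiableAt_id.neg |>.const_mul I

theorem differentiableOn_comp_sqrt (hU : IsOpen U) (hΩ : IsOpen Ω)
    (hg : DifferentiableOn ℂ g U) (heven : ∀ s ∈ U, g (-s) = g s)
    (hroots : ∀ s, s ^ 2 ∈ Ω → s ∈ U) :
    DifferentiableOn ℂ (g ∘ sqrt) Ω := by
  intro w hw
  rcases eq_or_ne w 0 with rfl | hw0
  · have hcont : ContinuousAt (g ∘ sqrt) 0 := by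
      refine ContinuousAt.comp ?_ (continuousAt_sqrt (Or.inl le_rfl))
      rw [sqrt_zero]
      exact (hg.differentiableAt (hU.mem_nhds (hroots 0 (by simpa using hw)))).continuousAt
    have hpunct : ∀ᶠ z in 𝓝[≠] 0, DifferentiableAt ℂ (g ∘ sqrt) z := by
      filter_upwards [nhdsWithin_le_nhds (hΩ.mem_nhds hw), self_mem_nhdsWithin] with z hz hz0
      exact differentiableAt_comp_sqrt_of_ne_zero hU hΩ hg heven hroots hz hz0
    exact (analyticAt_of_differentiable_on_punctured_nhds_of_continuousAt hpunct
      hcont).differentiableAt.differentiableWithinAt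
  · exact (differentiableAt_comp_sqrt_of_ne_zero hU hΩ hg heven hroots hw
      hw0).differentiableWithinAt

end EvenCompSqrt

lemma sq_le_of_sq_sub_sq_eq {a b X Y P : ℝ} (hX : 0 ≤ X) (hY : 0 ≤ Y)
    (hdiff : a ^ 2 - b ^ 2 = X - Y) (hprod : a * b = P) (hP : P ^ 2 ≤ X * Y) : b ^ 2 ≤ Y := by
  have hkey : (b ^ 2 - Y) * (b ^ 2 + X) ≤ 0 := by
    have : (b ^ 2 - Y) * (b ^ 2 + X) = (a * b) ^ 2 - X * Y := by
      rw [show X = a ^ 2 - b ^ 2 + Y by linarith]; ring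
    rw [this, hprod]; linarith
  by_contra! hbY
  nlinarith [mul_pos (sub_pos.mpr hbY) (by nlinarith : 0 < b ^ 2 + X)]

lemma im_sq_le_sum_im_sq {ι : Type*} [Fintype ι] (z : ι → ℂ) {s : ℂ}
    (h : s ^ 2 = ∑ i, z i ^ 2) : s.im ^ 2 ≤ ∑ i, (z i).im ^ 2 := by
  have hre := congrArg re h
  have him := congrArg im h
  simp only [re_sum, im_sum, sq, mul_re, mul_im] at hre him
  refine sq_le_of_sq_sub_sq_eq (a := s.re) (X := ∑ i, (z i).re ^ 2)
    (P := ∑ i, (z i).re * (z i).im) (by positivity) (by positivity) ?_ ?_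
    (Finset.sum_mul_sq_le_sq_mul_sq _ _ _)
  · rw [← Finset.sum_sub_distrib]; simpa only [sq] using hre
  · simp only [mul_comm (im _) (re _), ← two_mul, ← Finset.mul_sum] at him
    linarith

lemma isOpen_openStrip (R : ℝ) : IsOpen (openStrip R) :=
  isOpen_lt (by fun_prop) continuous_const

/-- The image of `openStrip R` under `s ↦ s ^ 2`, written so that it is visibly open. -/
def squaredStrip (R : ℝ) : Set ℂ := {w | √((‖w‖ - w.re) / 2) < R}

lemma isOpen_squaredStrip (R : ℝ) : IsOpen (squaredStrip R) :=
  isOpen_lt (by fun_prop) continuous_const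

lemma sq_mem_squaredStrip_iff {R : ℝ} {s : ℂ} : s ^ 2 ∈ squaredStrip R ↔ s ∈ openStrip R := by
  have : (‖s ^ 2‖ - (s ^ 2).re) / 2 = s.im ^ 2 := by
    rw [norm_pow, ← normSq_eq_norm_sq, normSq_apply, sq, mul_re]; ring
  simp only [squaredStrip, openStrip, Set.mem_ofPred_eq, this, Real.sqrt_sq_eq_abs]

lemma sum_sq_mem_squaredStrip {l : ℕ} {R : ℝ} {lam : Fin l → ℂ} (hlam : lam ∈ tube l R) :
    ∑ i, lam i ^ 2 ∈ squaredStrip R := by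
  rw [← sq_sqrt (∑ i, lam i ^ 2), sq_mem_squaredStrip_iff, openStrip, Set.mem_ofPred_eq,
    ← Real.sqrt_sq_eq_abs]
  exact (Real.sqrt_le_sqrt (im_sq_le_sum_im_sq lam (sq_sqrt _))).trans_lt hlam

theorem even_bounded_holomorphic_extends_to_tube_general {R : ℝ}
    {l : ℕ} (g : ℂ → ℂ)
    (hg : DifferentiableOn ℂ g (openStrip R))
    (heven : ∀ s ∈ openStrip R, g (-s) = g s) :
    ∃ f : (Fin l → ℂ) → ℂ,
      DifferentiableOn ℂ f (tube l R) ∧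
      (∀ lam ∈ tube l R, ∀ s ∈ openStrip R, s ^ 2 = ∑ i, lam i ^ 2 → f lam = g s) ∧
      (∀ C : ℝ, (∀ s ∈ openStrip R, ‖g s‖ ≤ C) → ∀ lam ∈ tube l R, ‖f lam‖ ≤ C) := by
  have hroot_mem {lam} (hlam : lam ∈ tube l R) : (∑ i, lam i ^ 2).sqrt ∈ openStrip R := by
    rw [← sq_mem_squaredStrip_iff, sq_sqrt]
    exact sum_sq_mem_squaredStrip hlam
  refine ⟨fun lam => g (∑ i, lam i ^ 2).sqrt, ?_, ?_, ?_⟩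
  · exact (differentiableOn_comp_sqrt (isOpen_openStrip R) (isOpen_squaredStrip R) hg heven
      fun s => sq_mem_squaredStrip_iff.mp).comp (by fun_prop)
      fun lam => sum_sq_mem_squaredStrip
  · intro lam hlam s hs hsq
    exact apply_eq_apply_of_sq_eq heven hs (by rw [sq_sqrt, hsq])
  · intro C hC lam hlam
    exact hC _ (hroot_mem hlam)

/-- If `g` is even, bounded and holomorphic on `I_R`, then there is a bounded
holomorphic `f` on `F_R` with `f(λ) = g(s)` whenever `s ∈ I_R` satisfies
`s² = λ₁² + ⋯ + λ_l²`, and every uniform bound for `g` on `I_R` is a uniform bound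
for `f` on `F_R`. -/
theorem even_bounded_holomorphic_extends_to_tube {R : ℝ} (hR : 0 < R)
    {l : ℕ} (hl : 1 ≤ l) (g : ℂ → ℂ)
    (hg : DifferentiableOn ℂ g (openStrip R))
    (heven : ∀ s ∈ openStrip R, g (-s) = g s)
    (hbdd : ∃ C : ℝ, ∀ s ∈ openStrip R, ‖g s‖ ≤ C) :
    ∃ f : (Fin l → ℂ) → ℂ,
      DifferentiableOn ℂ f (tube l R) ∧
      (∀ lam ∈ tube l R, ∀ s ∈ openStrip R, s ^ 2 = ∑ i, lam i ^ 2 → f lam = g s) ∧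
      (∀ C : ℝ, (∀ s ∈ openStrip R, ‖g s‖ ≤ C) → ∀ lam ∈ tube l R, ‖f lam‖ ≤ C) :=
  even_bounded_holomorphic_extends_to_tube_general g hg heven
end
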